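/- For all n ≥ 1, there is a bijection between the set of permutations of [n] avoiding 132, 213, and 2341 and the set of tilings of a 1×(n+1) rectangle with tiles of sizes 1×1 and 1×2 that use at least one 1×2 tile. -/

import Mathlib

/-- A permutation `π` of `Fin n` avoids the pattern given (in one-line notation) by the
list `s` when there is no increasing choice of positions along which the values of `π`
have the same pairwise comparisons as the entries of `s`. -/
def AvoidsPat {n : ℕ} (π : Equiv.Perm (Fin n)) (s : List ℕ) : Prop :=
  ¬ ∃ f : Fin s.length ↪o Fin n,
      ∀ i j : Fin s.length, s.get i < s.get j ↔ π (f i) < π (f j)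

/-- The number of permutations of `Fin n` avoiding every pattern in `R`. -/
noncomputable def AvoidCount (R : List (List ℕ)) (n : ℕ) : ℕ :=
  Nat.card {π : Equiv.Perm (Fin n) // ∀ s ∈ R, AvoidsPat π s}

/-- The `k`-generalized Fibonacci numbers: `F_{k,n} = 0` for `n ≤ 0`, `F_{k,1} = 1`,
`F_{k,n} = ∑_{i=1}^{k} F_{k,n-i}` for `n ≥ 2` (terms with nonpositive index are `0`). -/
def genFib (k : ℕ) : ℕ → ℕ
  | 0 => 0
  | 1 => 1
  | n + 2 => ∑ i ∈ Finset.range k, genFib k (n + 1 - i)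

/-!
An avoider `π : Perm (Fin n)` of 132, 213 and 2341 with `n ≥ 3` splits according to `π 0`.
If `π 0 = n - 1`, then `π` is the top value followed by an avoider of length `n - 1`; if
`π 0 = n - 2`, avoiding 213 forces `π 1 = n - 1`, and `π` is these two top values followed by an
avoider of length `n - 2`; otherwise the three patterns force `π` to be the identity. So the
avoiders satisfy `a (n + 3) = a (n + 2) + a (n + 1) + 1`. Tilings with a domino satisfy the same
recursion: after a first square comes a tiling with a domino, after a first domino any tiling,
and a tiling is either one with a domino or all squares.
-/

open Equiv

section Patterns

variable {n : ℕ}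

lemma not_avoidsPat_of_strictMono {π : Perm (Fin n)} {s : List ℕ} (f : Fin s.length → Fin n)
    (hf : StrictMono f) (h : ∀ i j, s.get i < s.get j ↔ π (f i) < π (f j)) :
    ¬ AvoidsPat π s :=
  fun hπ => hπ ⟨OrderEmbedding.ofStrictMono f hf, h⟩

lemma not_avoidsPat_132 (π : Perm (Fin n)) {a b c : Fin n} (hab : a < b) (hbc : b < c)
    (hac : π a < π c) (hcb : π c < π b) : ¬ AvoidsPat π [1, 3, 2] := by
  refine not_avoidsPat_of_strictMono ![a, b, c]
    (by simp [Fin.strictMono_iff_lt_succ, Fin.forall_fin_succ, hab, hbc]) ?_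
  simp [Fin.forall_fin_succ]
  grind

lemma not_avoidsPat_213 (π : Perm (Fin n)) {a b c : Fin n} (hab : a < b) (hbc : b < c)
    (hba : π b < π a) (hac : π a < π c) : ¬ AvoidsPat π [2, 1, 3] := by
  refine not_avoidsPat_of_strictMono ![a, b, c]
    (by simp [Fin.strictMono_iff_lt_succ, Fin.forall_fin_succ, hab, hbc]) ?_
  simp [Fin.forall_fin_succ]
  grind

lemma not_avoidsPat_2341 (π : Perm (Fin n)) {a b c d : Fin n} (hab : a < b) (hbc : b < c)
    (hcd : c < d) (hda : π d < π a) (hab' : π a < π b) (hbc' : π b < π c) :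
    ¬ AvoidsPat π [2, 3, 4, 1] := by
  refine not_avoidsPat_of_strictMono ![a, b, c, d]
    (by simp [Fin.strictMono_iff_lt_succ, Fin.forall_fin_succ, hab, hbc, hcd]) ?_
  simp [Fin.forall_fin_succ]
  grind

lemma avoidsPat_of_length_lt (π : Perm (Fin n)) {s : List ℕ} (h : n < s.length) :
    AvoidsPat π s :=
  fun ⟨f, _⟩ => h.not_ge (Fin.le_of_embedding f.toEmbedding)

lemma avoidsPat_one_of_lt {s : List ℕ} {i j : Fin s.length} (hij : i < j)
    (h : s.get j < s.get i) : AvoidsPat (1 : Perm (Fin n)) s := by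
  rintro ⟨f, hf⟩
  exact (f.strictMono hij).not_gt ((hf j i).mp h)

lemma avoidsPat_iff_of_orderEmbedding {N : ℕ} {π : Perm (Fin N)} {σ : Perm (Fin n)}
    {s : List ℕ} (e : Fin n ↪o Fin N) (he : ∀ a b, σ a < σ b ↔ π (e a) < π (e b))
    (hocc : ∀ f : Fin s.length ↪o Fin N, (∀ i j, s.get i < s.get j ↔ π (f i) < π (f j)) →
      ∀ i, f i ∈ Set.range e) :
    AvoidsPat π s ↔ AvoidsPat σ s := by
  refine not_congr ⟨fun ⟨f, hf⟩ => ?_,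
    fun ⟨f, hf⟩ => ⟨f.trans e, fun i j => (hf i j).trans (he _ _)⟩⟩
  choose g hg using hocc f hf
  refine ⟨OrderEmbedding.ofStrictMono g fun i j hij => ?_, fun i j => ?_⟩
  · rw [← e.lt_iff_lt, hg, hg]
    exact f.strictMono hij
  · change _ ↔ σ (g i) < σ (g j)
    rw [he, hg, hg, hf]

end Patterns

section PrependTop

variable {n k : ℕ}

/-- The skew sum `id_k ⊖ σ`: the first `k` positions carry the values `n, …, n + k - 1` in
increasing order, and the remaining ones carry `σ`. -/
def prependTop (k : ℕ) (σ : Perm (Fin n)) : Perm (Fin (n + k)) :=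
  (finCongr (add_comm n k)).trans <| finSumFinEquiv.symm.trans <|
    (Equiv.sumCongr (Equiv.refl _) σ).trans <| (Equiv.sumComm _ _).trans finSumFinEquiv

lemma prependTop_apply_of_lt (σ : Perm (Fin n)) {p : Fin (n + k)} (hp : (p : ℕ) < k) :
    prependTop k σ p = Fin.natAdd n ⟨p, hp⟩ := by
  have : Fin.cast (add_comm n k) p = Fin.castAdd n ⟨p, hp⟩ := rfl
  rw [prependTop, Equiv.trans_apply, finCongr_apply, this, Equiv.trans_apply,
    finSumFinEquiv_symm_apply_castAdd]
  simp

lemma prependTop_addNat (σ : Perm (Fin n)) (j : Fin n) :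
    prependTop k σ (j.addNat k) = Fin.castAdd k (σ j) := by
  have : Fin.cast (add_comm n k) (j.addNat k) = Fin.natAdd k j := by
    ext
    simp only [Fin.val_cast, Fin.val_addNat, Fin.val_natAdd]
    omega
  rw [prependTop, Equiv.trans_apply, finCongr_apply, this, Equiv.trans_apply,
    finSumFinEquiv_symm_apply_natAdd]
  simp

lemma prependTop_apply_of_le (σ : Perm (Fin n)) {p : Fin (n + k)} (hp : k ≤ (p : ℕ)) :
    prependTop k σ p = Fin.castAdd k (σ ⟨p - k, by omega⟩) := by
  obtain ⟨j, rfl⟩ : ∃ j : Fin n, j.addNat k = p := ⟨⟨p - k, by omega⟩, by ext; simp; omega⟩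
  simp [prependTop_addNat]

lemma val_prependTop_lt_iff (σ : Perm (Fin n)) (p : Fin (n + k)) :
    (prependTop k σ p : ℕ) < n ↔ k ≤ p := by
  rcases lt_or_ge (p : ℕ) k with hp | hp
  · simp [prependTop_apply_of_lt σ hp, hp]
  · simp [prependTop_apply_of_le σ hp, hp]

lemma val_prependTop_zero [NeZero (n + k)] (hk : 0 < k) (σ : Perm (Fin n)) :
    (prependTop k σ 0 : ℕ) = n := by
  rw [prependTop_apply_of_lt σ (p := 0) (by simpa using hk)]
  simp

lemma prependTop_injective : Function.Injective (prependTop (n := n) k) := fun σ τ h =>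
  Equiv.ext fun j => Fin.castAdd_injective _ _ <| by
    rw [← prependTop_addNat, ← prependTop_addNat, h]

lemma exists_prependTop_eq (π : Perm (Fin (n + k)))
    (h : ∀ p : Fin (n + k), (p : ℕ) < k → (π p : ℕ) = n + p) : ∃ σ, prependTop k σ = π := by
  have hlt (j : Fin n) : (π (j.addNat k) : ℕ) < n := by
    by_contra! hge
    have hv := (π (j.addNat k)).isLt
    set q : Fin (n + k) := ⟨π (j.addNat k) - n, by omega⟩
    have hq : π q = π (j.addNat k) :=
      Fin.ext ((h q (by simp [q]; omega)).trans (by simp [q]; omega))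
    have := congrArg Fin.val (π.injective hq)
    simp [q] at this
    omega
  let σ : Perm (Fin n) := Equiv.ofBijective (fun j => ⟨π (j.addNat k), hlt j⟩)
    (Finite.injective_iff_bijective.mp fun a b hab => by
      simpa using π.injective (Fin.ext (Fin.mk.inj_iff.mp hab)))
  refine ⟨σ, Equiv.ext fun p => Fin.ext ?_⟩
  rcases lt_or_ge (p : ℕ) k with hp | hp
  · simp [prependTop_apply_of_lt σ hp, h p hp]
  · have : (⟨p - k, by omega⟩ : Fin n).addNat k = p := by ext; simp; omega
    simp [prependTop_apply_of_le σ hp, σ, this]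

/-- An occurrence starting in the top block has its third entry above its first, hence also in
the top block; but the block has fewer than three positions. -/
lemma avoidsPat_prependTop_iff (hk : k ≤ 2) (σ : Perm (Fin n)) {s : List ℕ}
    (hs : 2 < s.length) (h02 : s[0] < s[2]) :
    AvoidsPat (prependTop k σ) s ↔ AvoidsPat σ s := by
  refine avoidsPat_iff_of_orderEmbedding (Fin.addNatOrderEmb k) (fun a b => ?_) ?_
  · change _ ↔ prependTop k σ (a.addNat k) < prependTop k σ (b.addNat k)
    rw [prependTop_addNat, prependTop_addNat, (Fin.strictMono_castAdd k).lt_iff_lt]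
  intro f hf i
  have h0 : k ≤ (f ⟨0, by omega⟩ : ℕ) := by
    by_contra! h
    have h02' := (hf ⟨0, by omega⟩ ⟨2, hs⟩).mp h02
    rw [Fin.lt_def] at h02'
    have htop₀ := (val_prependTop_lt_iff σ (f ⟨0, by omega⟩)).not.mpr (by omega)
    have htop₂ := (val_prependTop_lt_iff σ (f ⟨2, hs⟩)).not.mp (by omega)
    have : f ⟨0, by omega⟩ < f ⟨1, by omega⟩ := f.strictMono (by simp [Fin.lt_def])
    have : f ⟨1, by omega⟩ < f ⟨2, hs⟩ := f.strictMono (by simp [Fin.lt_def])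
    simp only [Fin.lt_def] at *
    omega
  have : f ⟨0, by omega⟩ ≤ f i := f.monotone (Fin.le_def.mpr (Nat.zero_le _))
  exact ⟨⟨f i - k, by omega⟩, by ext; simp; omega⟩

end PrependTop

section FirstValue

variable {n : ℕ}

lemma apply_one_eq_last_of_avoidsPat_213 (π : Perm (Fin (n + 2)))
    (h213 : AvoidsPat π [2, 1, 3]) (h0 : (π 0 : ℕ) = n) : π 1 = Fin.last (n + 1) := by
  by_contra h1
  set p := π.symm (Fin.last (n + 1))
  have hp : π p = Fin.last (n + 1) := π.apply_symm_apply _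
  have hp0 : p ≠ 0 := fun h => by simp [h, Fin.ext_iff] at hp; omega
  have hp1 : p ≠ 1 := fun h => h1 (h ▸ hp)
  have hπ1 : (π 1 : ℕ) ≠ n := fun h => by
    simpa using π.injective (Fin.ext (h.trans h0.symm))
  have h1p : 1 < p := by
    rw [Fin.lt_def]
    have := Fin.val_ne_iff.mpr hp0
    have := Fin.val_ne_iff.mpr hp1
    simp only [Fin.val_zero, Fin.val_one] at *
    omega
  have h10 : π 1 < π 0 := by
    have := (π 1).isLt
    have := Fin.val_ne_iff.mpr h1
    simp only [Fin.lt_def, Fin.val_last] at *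
    omega
  exact not_avoidsPat_213 π Fin.zero_lt_one h1p h10 (by simp [Fin.lt_def, hp, h0]) h213

lemma eq_one_of_apply_zero_eq_zero (π : Perm (Fin (n + 1))) (h132 : AvoidsPat π [1, 3, 2])
    (h0 : π 0 = 0) : π = 1 := by
  suffices StrictMono π from Equiv.ext fun p => this.apply_eq
  intro i j hij
  by_contra! hji
  replace hji : π j < π i := hji.lt_of_ne (π.injective.ne hij.ne')
  have hi : 0 < i := by
    refine (Fin.zero_le i).lt_of_ne' fun hi => ?_
    rw [hi, h0] at hji
    exact (Fin.zero_le _).not_gt hji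
  have hj : π 0 < π j := by
    rw [h0]
    exact (Fin.zero_le _).lt_of_ne' fun h => (hi.trans hij).ne' (π.injective (h.trans h0.symm))
  exact not_avoidsPat_132 π hi hij hj hji h132

/-- With `v = π 0 > 0`, the positions of `v + 1`, `v + 2` and `0` complete an occurrence of one
of the three patterns. -/
lemma apply_zero_eq_zero_of_lt (π : Perm (Fin (n + 2))) (h132 : AvoidsPat π [1, 3, 2])
    (h213 : AvoidsPat π [2, 1, 3]) (h2341 : AvoidsPat π [2, 3, 4, 1]) (h : (π 0 : ℕ) < n) :
    π 0 = 0 := by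
  by_contra hv
  have hv : 0 < (π 0 : ℕ) := Fin.pos_iff_ne_zero.mpr hv
  set p₁ := π.symm ⟨π 0 + 1, by omega⟩
  set p₂ := π.symm ⟨π 0 + 2, by omega⟩
  set r := π.symm 0
  have hp₁ : (π p₁ : ℕ) = π 0 + 1 := by simp [p₁]
  have hp₂ : (π p₂ : ℕ) = π 0 + 2 := by simp [p₂]
  have hr : π r = 0 := by simp [r]
  have hr₀ : π r < π 0 := by rw [hr, Fin.lt_def, Fin.val_zero]; exact hv
  have pos (q : Fin (n + 2)) (hq : (π q : ℕ) ≠ π 0) : 0 < q :=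
    Fin.pos_iff_ne_zero.mpr fun h => hq (by rw [h])
  have h₁₂ : p₁ < p₂ := by
    refine lt_of_le_of_ne (not_lt.mp fun h₂₁ => ?_) fun h => by simp_all
    exact not_avoidsPat_132 π (pos p₂ (by omega)) h₂₁ (by rw [Fin.lt_def, hp₁]; omega)
      (by rw [Fin.lt_def, hp₁, hp₂]; omega) h132
  rcases lt_or_gt_of_ne (show r ≠ p₂ from fun h => by simp_all) with hr₂ | hr₂
  · exact not_avoidsPat_213 π (pos r (by simp [hr]; omega)) hr₂ hr₀
      (by rw [Fin.lt_def, hp₂]; omega) h213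
  · exact not_avoidsPat_2341 π (pos p₁ (by omega)) h₁₂ hr₂ hr₀
      (by rw [Fin.lt_def, hp₁]; omega) (by rw [Fin.lt_def, hp₁, hp₂]; omega) h2341

end FirstValue

section Avoiders

variable {n k : ℕ}

abbrev AvoidsTriple (π : Perm (Fin n)) : Prop :=
  AvoidsPat π [1, 3, 2] ∧ AvoidsPat π [2, 1, 3] ∧ AvoidsPat π [2, 3, 4, 1]

abbrev Av (n : ℕ) : Type := {π : Perm (Fin n) // AvoidsTriple π}

lemma avoidsTriple_prependTop_iff (hk : k ≤ 2) (σ : Perm (Fin n)) :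
    AvoidsTriple (prependTop k σ) ↔ AvoidsTriple σ := by
  rw [AvoidsTriple, AvoidsTriple,
    avoidsPat_prependTop_iff hk σ (s := [1, 3, 2]) (by simp) (by simp),
    avoidsPat_prependTop_iff hk σ (s := [2, 1, 3]) (by simp) (by simp),
    avoidsPat_prependTop_iff hk σ (s := [2, 3, 4, 1]) (by simp) (by simp)]

lemma avoidsTriple_one : AvoidsTriple (1 : Perm (Fin n)) :=
  ⟨avoidsPat_one_of_lt (i := 1) (j := 2) (by decide) (by decide),
    avoidsPat_one_of_lt (i := 0) (j := 1) (by decide) (by decide),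
    avoidsPat_one_of_lt (i := 0) (j := 3) (by decide) (by decide)⟩

def Av.equivPerm (h : n ≤ 2) : Av n ≃ Perm (Fin n) :=
  Equiv.subtypeUnivEquiv fun π =>
    ⟨avoidsPat_of_length_lt π (by simp; omega), avoidsPat_of_length_lt π (by simp; omega),
      avoidsPat_of_length_lt π (by simp; omega)⟩

def Av.prependTop (hk : k ≤ 2) (σ : Av n) : Av (n + k) :=
  ⟨_root_.prependTop k σ.1, (avoidsTriple_prependTop_iff hk σ.1).mpr σ.2⟩

lemma Av.prependTop_injective (hk : k ≤ 2) : Function.Injective (Av.prependTop (n := n) hk) :=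
  fun _ _ h => Subtype.ext (_root_.prependTop_injective (congrArg Subtype.val h))

lemma Av.exists_prependTop_eq (hk : k ≤ 2) (π : Av (n + k))
    (h : ∀ p : Fin (n + k), (p : ℕ) < k → (π.1 p : ℕ) = n + p) :
    ∃ σ : Av n, Av.prependTop hk σ = π := by
  obtain ⟨σ, hσ⟩ := _root_.exists_prependTop_eq π.1 h
  exact ⟨⟨σ, (avoidsTriple_prependTop_iff hk σ).mp (hσ ▸ π.2)⟩, Subtype.ext hσ⟩

def Av.ofSum (m : ℕ) : Av (m + 2) ⊕ Av (m + 1) ⊕ Unit → Av (m + 3) :=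
  Sum.elim (Av.prependTop (k := 1) (by norm_num))
    (Sum.elim (Av.prependTop (k := 2) le_rfl) fun _ => ⟨1, avoidsTriple_one⟩)

lemma Av.ofSum_injective (m : ℕ) : Function.Injective (Av.ofSum m) := by
  have h₁ (σ : Av (m + 2)) : (σ.prependTop (k := 1) (by norm_num)).1 0 = m + 2 :=
    val_prependTop_zero one_pos σ.1
  have h₂ (σ : Av (m + 1)) : (σ.prependTop (k := 2) le_rfl).1 0 = m + 1 :=
    val_prependTop_zero two_pos σ.1
  refine (Av.prependTop_injective _).sumElim ((Av.prependTop_injective _).sumElim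
    (Function.injective_of_subsingleton (α := Unit) _) fun σ _ h => ?_) ?_
  · simpa [h] using h₂ σ
  · rintro σ (τ | _) h
    · have := h₁ σ
      rw [h, Sum.elim_inl, h₂ τ] at this
      omega
    · simpa [h] using h₁ σ

lemma Av.ofSum_surjective (m : ℕ) : Function.Surjective (Av.ofSum m) := by
  intro π
  have hlt := (π.1 0).isLt
  rcases (show (π.1 0 : ℕ) = m + 2 ∨ (π.1 0 : ℕ) = m + 1 ∨ (π.1 0 : ℕ) < m + 1 by omega)
    with h | h | h
  · obtain ⟨σ, rfl⟩ := Av.exists_prependTop_eq (n := m + 2) (k := 1) (by norm_num) π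
      fun p hp => by
        obtain rfl : p = 0 := Fin.ext (by simpa using hp)
        simpa using h
    exact ⟨.inl σ, rfl⟩
  · have h1 := apply_one_eq_last_of_avoidsPat_213 (n := m + 1) π.1 π.2.2.1 h
    obtain ⟨σ, rfl⟩ := Av.exists_prependTop_eq (n := m + 1) (k := 2) le_rfl π fun p hp => by
      obtain rfl | rfl : p = 0 ∨ p = 1 := by
        rcases (show (p : ℕ) = 0 ∨ (p : ℕ) = 1 by omega) with hp | hp
        exacts [.inl (Fin.ext (by simp [hp])), .inr (Fin.ext (by simp [hp]))]
      · simpa using h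
      · simp [h1]
    exact ⟨.inr (.inl σ), rfl⟩
  · obtain ⟨π, h132, h213, h2341⟩ := π
    refine ⟨.inr (.inr ()), Subtype.ext ?_⟩
    exact (eq_one_of_apply_zero_eq_zero π h132
      (apply_zero_eq_zero_of_lt π h132 h213 h2341 h)).symm

noncomputable def Av.sumEquiv (m : ℕ) : Av (m + 2) ⊕ Av (m + 1) ⊕ Unit ≃ Av (m + 3) :=
  Equiv.ofBijective (Av.ofSum m) ⟨Av.ofSum_injective m, Av.ofSum_surjective m⟩

end Avoiders

section Tilings

variable {m : ℕ}

/-- A tiling of a `1 × m` strip by squares and dominoes, as the list of its tile lengths. -/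
abbrev Tiling (m : ℕ) : Type := {l : List ℕ // l.sum = m ∧ ∀ x ∈ l, x = 1 ∨ x = 2}

abbrev TilingWithDomino (m : ℕ) : Type :=
  {l : List ℕ // l.sum = m ∧ (∀ x ∈ l, x = 1 ∨ x = 2) ∧ 2 ∈ l}

lemma Tiling.eq_replicate_of_two_notMem (t : Tiling m) (h : 2 ∉ t.1) :
    t.1 = List.replicate m 1 := by
  have h1 : ∀ x ∈ t.1, x = 1 := fun x hx =>
    (t.2.2 x hx).resolve_right (by rintro rfl; exact h hx)
  have hl := List.eq_replicate_iff.mpr ⟨rfl, h1⟩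
  have hsum := t.2.1
  rw [hl] at hsum ⊢
  simpa using hsum

def Tiling.equivSum (m : ℕ) : Tiling m ≃ TilingWithDomino m ⊕ Unit :=
  (Equiv.sumCompl fun t : Tiling m => 2 ∈ t.1).symm.trans <| Equiv.sumCongr
    ((Equiv.subtypeSubtypeEquivSubtypeInter _ _).trans
      (Equiv.subtypeEquivRight fun _ => and_assoc))
    { toFun := fun _ => ()
      invFun := fun _ => ⟨⟨List.replicate m 1, by simp⟩, by simp⟩
      left_inv := fun t => Subtype.ext (Subtype.ext (t.1.eq_replicate_of_two_notMem t.2).symm) }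

lemma TilingWithDomino.isEmpty_of_lt (h : m < 2) : IsEmpty (TilingWithDomino m) :=
  ⟨fun t => by have := List.le_sum_of_mem t.2.2.2; have := t.2.1; omega⟩

def TilingWithDomino.ofSum (m : ℕ) :
    TilingWithDomino (m + 1) ⊕ Tiling m → TilingWithDomino (m + 2) :=
  Sum.elim (fun t => ⟨1 :: t.1, by grind⟩) (fun t => ⟨2 :: t.1, by grind⟩)

lemma TilingWithDomino.ofSum_bijective (m : ℕ) : Function.Bijective (TilingWithDomino.ofSum m) := by
  refine ⟨Function.Injective.sumElim ?_ ?_ fun _ _ h => ?_, ?_⟩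
  · exact fun _ _ h => Subtype.ext (List.cons_injective (congrArg Subtype.val h))
  · exact fun _ _ h => Subtype.ext (List.cons_injective (congrArg Subtype.val h))
  · simpa using congrArg (List.head? ∘ Subtype.val) h
  · rintro ⟨_ | ⟨a, l⟩, hsum, h12, h2⟩
    · simp at hsum
    · rcases h12 a List.mem_cons_self with rfl | rfl
      · exact ⟨.inl ⟨l, by grind⟩, rfl⟩
      · exact ⟨.inr ⟨l, by grind⟩, rfl⟩

noncomputable def TilingWithDomino.sumEquiv (m : ℕ) :
    TilingWithDomino (m + 1) ⊕ TilingWithDomino m ⊕ Unit ≃ TilingWithDomino (m + 2) :=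
  (Equiv.sumCongr (Equiv.refl _) (Tiling.equivSum m).symm).trans
    (Equiv.ofBijective _ (TilingWithDomino.ofSum_bijective m))

noncomputable def TilingWithDomino.twoEquiv : TilingWithDomino 2 ≃ Unit :=
  have := TilingWithDomino.isEmpty_of_lt (m := 0) (by norm_num)
  have := TilingWithDomino.isEmpty_of_lt (m := 1) (by norm_num)
  (TilingWithDomino.sumEquiv 0).symm.trans ((Equiv.emptySum _ _).trans (Equiv.emptySum _ _))

noncomputable def TilingWithDomino.threeEquiv : TilingWithDomino 3 ≃ Unit ⊕ Unit :=
  have := TilingWithDomino.isEmpty_of_lt (m := 1) (by norm_num)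
  (TilingWithDomino.sumEquiv 1).symm.trans
    (Equiv.sumCongr TilingWithDomino.twoEquiv (Equiv.emptySum _ _))

end Tilings

theorem avoid_132_213_2341_equiv_tilings (n : ℕ) (hn : 1 ≤ n) :
    Nonempty
      ({π : Equiv.Perm (Fin n) //
          AvoidsPat π [1, 3, 2] ∧ AvoidsPat π [2, 1, 3] ∧ AvoidsPat π [2, 3, 4, 1]} ≃
        {l : List ℕ // l.sum = n + 1 ∧ (∀ x ∈ l, x = 1 ∨ x = 2) ∧ 2 ∈ l}) := by
  induction n using Nat.strong_induction_on with
  | _ n ih =>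
    match n, hn with
    | 1, _ =>
      exact ⟨(Av.equivPerm (by norm_num)).trans <|
        (Fintype.equivOfCardEq (by simp)).trans TilingWithDomino.twoEquiv.symm⟩
    | 2, _ =>
      exact ⟨(Av.equivPerm le_rfl).trans <|
        (Fintype.equivOfCardEq (by simp [Fintype.card_perm])).trans
          TilingWithDomino.threeEquiv.symm⟩
    | m + 3, _ =>
      obtain ⟨e₁⟩ := ih (m + 2) (by omega) (by omega)
      obtain ⟨e₂⟩ := ih (m + 1) (by omega) (by omega)
      exact ⟨(Av.sumEquiv m).symm.trans <|
        (Equiv.sumCongr e₁ (Equiv.sumCongr e₂ (Equiv.refl _))).trans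
          (TilingWithDomino.sumEquiv (m + 2))⟩
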